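/- Let d, k ≥ 1, let K ⊆ ℝ^d be compact, and let g : ℝ^d → ℝ be bounded and measurable. Define W_g(c) = ∫_K min_{j=1,…,k} ‖x − c_j‖² g(x) dx for c = (c_1,…,c_k) ∈ (ℝ^d)^k. If c has pairwise distinct centers, then for every direction c' = (c'_1,…,c'_k) ∈ (ℝ^d)^k the directional derivative of W_g at c along c' exists and equals −2 Σ_{j=1}^k ∫_{V_j(c) ∩ K} ⟨x − c_j, c'_j⟩ g(x) dx, where ⟨·,·⟩ is the Euclidean inner product. -/

import Mathlib

/-!
Off the perpendicular bisectors of pairs of distinct centers, a null set, every point `x` has a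
unique nearest center `c i`. Near `t = 0` the minimum `min_j ‖x - c j - t c' j‖²` is then attained
by `i` alone, so its derivative at `0` is `-2 ⟪x - c i, c' i⟫`. Each `t ↦ ‖x - c j - t c' j‖²` is
Lipschitz on `(-1, 1)` with a constant continuous in `x`, hence so is their minimum, and
differentiation under the integral sign (dominated convergence) gives the derivative of `W_g`.
-/

open MeasureTheory RealInnerProductSpace

def voronoiCell {d k : ℕ} (c : Fin k → EuclideanSpace ℝ (Fin d)) (j : Fin k) :
    Set (EuclideanSpace ℝ (Fin d)) :=
  {x | ∀ u : Fin k, ‖x - c j‖ ≤ ‖x - c u‖}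

open Filter Topology Set
open scoped NNReal

lemma iInf_eventuallyEq_of_forall_lt {α ι : Type*} [TopologicalSpace α] [Finite ι]
    {f : ι → α → ℝ} {a : α} {i : ι} (hf : ∀ j, ContinuousAt (f j) a)
    (hlt : ∀ j ≠ i, f i a < f j a) : (fun t => ⨅ j, f j t) =ᶠ[𝓝 a] f i := by
  have : Nonempty ι := ⟨i⟩
  have hmin : ∀ᶠ t in 𝓝 a, ∀ j, f i t ≤ f j t := by
    refine eventually_all.2 fun j => ?_
    rcases eq_or_ne j i with rfl | hji
    · exact Eventually.of_forall fun _ => le_rfl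
    · exact ((hf i).eventually_lt (hf j) (hlt j hji)).mono fun _ ht => ht.le
  filter_upwards [hmin] with t ht
  exact le_antisymm (ciInf_le (Finite.bddBelow_range _) i) (le_ciInf ht)

theorem LipschitzOnWith.iInf {α ι : Type*} [PseudoMetricSpace α] [Finite ι] [Nonempty ι]
    {f : ι → α → ℝ} {K : ℝ≥0} {s : Set α} (hf : ∀ j, LipschitzOnWith K (f j) s) :
    LipschitzOnWith K (fun t => ⨅ j, f j t) s := by
  refine LipschitzOnWith.of_le_add_mul K fun x hx y hy => ?_
  obtain ⟨j, hj⟩ := exists_eq_ciInf_of_finite (f := fun j => f j y)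
  calc ⨅ j, f j x ≤ f j x := ciInf_le (Finite.bddBelow_range _) j
    _ ≤ f j y + K * dist x y := (hf j).le_add_mul hx hy
    _ = (⨅ j, f j y) + K * dist x y := by rw [hj]

theorem LipschitzOnWith.mul_const {α : Type*} [PseudoMetricSpace α] {f : α → ℝ} {K : ℝ≥0}
    {s : Set α} (hf : LipschitzOnWith K f s) (b : ℝ) :
    LipschitzOnWith (K * Real.nnabs b) (fun t => f t * b) s := by
  refine LipschitzOnWith.of_dist_le_mul fun x hx y hy => ?_
  rw [Real.dist_eq, ← sub_mul, abs_mul, NNReal.coe_mul, Real.coe_nnabs, mul_right_comm]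
  exact mul_le_mul_of_nonneg_right (hf.dist_le_mul x hx y hy) (abs_nonneg b)

theorem Continuous.integrableOn_mul_bdd {X : Type*} [TopologicalSpace X] [MeasurableSpace X]
    [OpensMeasurableSpace X] [T2Space X] {μ : Measure X} [IsFiniteMeasureOnCompacts μ]
    {φ g : X → ℝ} {K : Set X} {M : ℝ} (hφ : Continuous φ) (hK : IsCompact K)
    (hg : AEStronglyMeasurable g μ) (hgM : ∀ x, |g x| ≤ M) : IntegrableOn (fun x => φ x * g x) K μ :=
  (hφ.continuousOn.integrableOn_compact hK).mul_bdd hg.restrict (Eventually.of_forall hgM)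

section Pointwise

variable {E ι : Type*} [NormedAddCommGroup E]

noncomputable def minSqDist (c : ι → E) (x : E) : ℝ := ⨅ j, ‖x - c j‖ ^ 2

lemma continuous_minSqDist [Finite ι] [Nonempty ι] (c : ι → E) : Continuous (minSqDist c) := by
  have := Fintype.ofFinite ι
  show Continuous fun x => ⨅ j, ‖x - c j‖ ^ 2
  simp_rw [← Finset.inf'_univ_eq_ciInf]
  exact Continuous.finset_inf'_apply _ fun j _ => by fun_prop

variable [InnerProductSpace ℝ E]

lemma hasDerivAt_norm_sub_add_smul_sq (x a v : E) (t : ℝ) :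
    HasDerivAt (fun t : ℝ => ‖x - (a + t • v)‖ ^ 2) (-2 * ⟪x - (a + t • v), v⟫) t := by
  simpa using (((hasDerivAt_id t).smul_const v).const_add a).const_sub x |>.norm_sq

lemma lipschitzOnWith_norm_sub_add_smul_sq (x a v : E) :
    LipschitzOnWith (Real.nnabs (2 * (‖x - a‖ + ‖v‖) * ‖v‖))
      (fun t : ℝ => ‖x - (a + t • v)‖ ^ 2) (Metric.ball 0 1) := by
  refine (convex_ball 0 1).lipschitzOnWith_of_nnnorm_hasDerivWithin_le
    (fun t _ => (hasDerivAt_norm_sub_add_smul_sq x a v t).hasDerivWithinAt) fun t ht => ?_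
  have hsmul : ‖t • v‖ ≤ ‖v‖ := by
    rw [norm_smul]
    exact mul_le_of_le_one_left (norm_nonneg v) (mem_ball_zero_iff.1 ht).le
  have hdist : ‖x - (a + t • v)‖ ≤ ‖x - a‖ + ‖v‖ := by
    rw [← sub_sub]
    exact (norm_sub_le _ _).trans (by gcongr)
  rw [← NNReal.coe_le_coe, coe_nnnorm, Real.coe_nnabs, Real.norm_eq_abs, abs_mul, abs_mul,
    abs_of_nonneg (by positivity : (0 : ℝ) ≤ 2 * (‖x - a‖ + ‖v‖)), abs_neg, abs_two,
    abs_of_nonneg (norm_nonneg v), mul_assoc]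
  gcongr
  exact (abs_real_inner_le_norm _ _).trans (by gcongr)

lemma minSqDist_add_smul_eventuallyEq [Finite ι] {c : ι → E} (c' : ι → E) {x : E} {i : ι}
    (hi : ∀ j ≠ i, ‖x - c i‖ < ‖x - c j‖) :
    (fun t : ℝ => minSqDist (c + t • c') x) =ᶠ[𝓝 0] fun t => ‖x - (c i + t • c' i)‖ ^ 2 := by
  simp only [minSqDist, Pi.add_apply, Pi.smul_apply]
  exact iInf_eventuallyEq_of_forall_lt (fun j => by fun_prop) fun j hj => by
    simpa using pow_lt_pow_left₀ (hi j hj) (norm_nonneg _) two_ne_zero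

lemma hasDerivAt_minSqDist_add_smul [Finite ι] {c : ι → E} (c' : ι → E) {x : E} {i : ι}
    (hi : ∀ j ≠ i, ‖x - c i‖ < ‖x - c j‖) :
    HasDerivAt (fun t : ℝ => minSqDist (c + t • c') x) (-2 * ⟪x - c i, c' i⟫) 0 := by
  simpa using (hasDerivAt_norm_sub_add_smul_sq x (c i) (c' i) 0).congr_of_eventuallyEq
    (minSqDist_add_smul_eventuallyEq c' hi)

lemma lipschitzOnWith_minSqDist_add_smul [Fintype ι] [Nonempty ι] (c c' : ι → E) (x : E) :
    LipschitzOnWith (Real.nnabs (∑ j, 2 * (‖x - c j‖ + ‖c' j‖) * ‖c' j‖))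
      (fun t : ℝ => minSqDist (c + t • c') x) (Metric.ball 0 1) := by
  refine LipschitzOnWith.iInf fun j =>
    (lipschitzOnWith_norm_sub_add_smul_sq x (c j) (c' j)).weaken ?_
  rw [← NNReal.coe_le_coe, Real.coe_nnabs, Real.coe_nnabs, abs_of_nonneg (by positivity),
    abs_of_nonneg (by positivity)]
  exact Finset.single_le_sum (f := fun j => 2 * (‖x - c j‖ + ‖c' j‖) * ‖c' j‖)
    (fun j _ => by positivity) (Finset.mem_univ j)

end Pointwise

section Measure

variable {E ι : Type*} [NormedAddCommGroup E] [InnerProductSpace ℝ E]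
  [FiniteDimensional ℝ E] [MeasurableSpace E] [BorelSpace E]
  (μ : Measure E) [μ.IsAddHaarMeasure]

lemma ae_norm_sub_ne_norm_sub {a b : E} (hab : a ≠ b) : ∀ᵐ x ∂μ, ‖x - a‖ ≠ ‖x - b‖ := by
  have hnull : μ (AffineSubspace.perpBisector a b) = 0 :=
    Measure.addHaar_affineSubspace μ _ (by simpa using hab)
  filter_upwards [measure_eq_zero_iff_ae_notMem.1 hnull] with x hx
  simpa [AffineSubspace.mem_perpBisector_iff_dist_eq, dist_eq_norm] using hx

lemma ae_exists_forall_norm_sub_lt [Finite ι] [Nonempty ι] {c : ι → E}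
    (hc : Function.Injective c) : ∀ᵐ x ∂μ, ∃ i, ∀ j ≠ i, ‖x - c i‖ < ‖x - c j‖ := by
  have hne : ∀ᵐ x ∂μ, ∀ i j, i ≠ j → ‖x - c i‖ ≠ ‖x - c j‖ := by
    refine eventually_all.2 fun i => eventually_all.2 fun j => ?_
    rcases eq_or_ne i j with rfl | hij
    · exact Eventually.of_forall fun _ h => absurd rfl h
    · exact (ae_norm_sub_ne_norm_sub μ (hc.ne hij)).mono fun _ hx _ => hx
  filter_upwards [hne] with x hx
  obtain ⟨i, hi⟩ := Finite.exists_min fun j => ‖x - c j‖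
  exact ⟨i, fun j hj => (hi j).lt_of_ne (hx i j hj.symm)⟩

end Measure

section Voronoi

variable {d k : ℕ} {c : Fin k → EuclideanSpace ℝ (Fin d)}

lemma measurableSet_voronoiCell (c : Fin k → EuclideanSpace ℝ (Fin d)) (j : Fin k) :
    MeasurableSet (voronoiCell c j) := by
  simp only [voronoiCell, ofPred_forall]
  exact MeasurableSet.iInter fun u => measurableSet_le (by fun_prop) (by fun_prop)

lemma sum_indicator_voronoiCell {x : EuclideanSpace ℝ (Fin d)} {i : Fin k}
    (hi : ∀ j ≠ i, ‖x - c i‖ < ‖x - c j‖) (f : Fin k → EuclideanSpace ℝ (Fin d) → ℝ) :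
    ∑ j, (voronoiCell c j).indicator (f j) x = f i x := by
  rw [Finset.sum_eq_single i]
  · refine indicator_of_mem (fun u => ?_) _
    rcases eq_or_ne u i with rfl | hu
    exacts [le_rfl, (hi u hu).le]
  · exact fun j _ hj => indicator_of_notMem (fun hx => (hx i).not_gt (hi j hj)) _
  · simp

theorem hasDerivAt_integral_minSqDist_add_smul_mul [Nonempty (Fin k)]
    (μ : Measure (EuclideanSpace ℝ (Fin d))) [μ.IsAddHaarMeasure]
    {K : Set (EuclideanSpace ℝ (Fin d))} (hK : IsCompact K) {g : EuclideanSpace ℝ (Fin d) → ℝ}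
    {M : ℝ} (hg : Measurable g) (hgM : ∀ x, |g x| ≤ M) (hc : Function.Injective c)
    (c' : Fin k → EuclideanSpace ℝ (Fin d)) :
    HasDerivAt (fun t : ℝ => ∫ x in K, minSqDist (c + t • c') x * g x ∂μ)
      (-2 * ∑ j, ∫ x in voronoiCell c j ∩ K, ⟪x - c j, c' j⟫ * g x ∂μ) 0 := by
  have hintegrable : ∀ φ, Continuous φ → IntegrableOn (fun x => φ x * g x) K μ :=
    fun φ hφ => hφ.integrableOn_mul_bdd hK hg.aestronglyMeasurable hgM
  set F' := fun x => -2 * ∑ j, (voronoiCell c j).indicator (fun y => ⟪y - c j, c' j⟫ * g y) x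
  have hF' : ∫ x in K, F' x ∂μ =
      -2 * ∑ j, ∫ x in voronoiCell c j ∩ K, ⟪x - c j, c' j⟫ * g x ∂μ := by
    rw [integral_const_mul, integral_finsetSum _ fun j _ =>
      (hintegrable _ (by fun_prop)).indicator (measurableSet_voronoiCell c j)]
    simp_rw [integral_indicator (measurableSet_voronoiCell c _),
      Measure.restrict_restrict (measurableSet_voronoiCell c _)]
  rw [← hF']
  refine (hasDerivAt_integral_of_dominated_loc_of_lip (Metric.ball_mem_nhds 0 one_pos)
    (bound := fun x => (∑ j, 2 * (‖x - c j‖ + ‖c' j‖) * ‖c' j‖) * g x)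
    ?meas ?int ?meas' ?lip ?bound ?diff).2
  case meas => exact Eventually.of_forall fun t =>
    ((continuous_minSqDist _).measurable.mul hg).aestronglyMeasurable
  case int => exact hintegrable _ (continuous_minSqDist _)
  case meas' =>
    refine (Measurable.const_mul (Finset.measurable_sum _ fun j _ => ?_) _).aestronglyMeasurable
    exact ((by fun_prop : Measurable fun y => ⟪y - c j, c' j⟫).mul hg).indicator
      (measurableSet_voronoiCell c j)
  case lip =>
    refine Eventually.of_forall fun x => ?_
    rw [map_mul]
    exact (lipschitzOnWith_minSqDist_add_smul c c' x).mul_const (g x)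
  case bound => exact hintegrable _ (by fun_prop)
  case diff =>
    filter_upwards [ae_restrict_of_ae (ae_exists_forall_norm_sub_lt μ hc)] with x ⟨i, hi⟩
    refine ((hasDerivAt_minSqDist_add_smul c' hi).mul_const (g x)).congr_deriv ?_
    simp only [F', sum_indicator_voronoiCell hi]
    ring

end Voronoi

theorem directional_derivative_of_weighted_distortion_general
    (d k : ℕ) (hk : 1 ≤ k)
    (K : Set (EuclideanSpace ℝ (Fin d))) (hK : IsCompact K)
    (g : EuclideanSpace ℝ (Fin d) → ℝ)
    (hg_bdd : ∃ M : ℝ, ∀ x, |g x| ≤ M) (hg_meas : Measurable g)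
    (W : (Fin k → EuclideanSpace ℝ (Fin d)) → ℝ)
    (hW : W = fun c => ∫ x in K, (⨅ j : Fin k, ‖x - c j‖ ^ 2) * g x)
    (c : Fin k → EuclideanSpace ℝ (Fin d))
    (hc : Function.Injective c) :
    ∀ c' : Fin k → EuclideanSpace ℝ (Fin d),
      Filter.Tendsto (fun h : ℝ => (W (c + h • c') - W c) / h)
        (nhdsWithin 0 {0}ᶜ)
        (nhds (-2 * ∑ j : Fin k, ∫ x in voronoiCell c j ∩ K, ⟪x - c j, c' j⟫ * g x)) := by
  intro c'
  obtain ⟨M, hgM⟩ := hg_bdd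
  have : Nonempty (Fin k) := ⟨⟨0, hk⟩⟩
  have hderiv := hasDerivAt_integral_minSqDist_add_smul_mul volume hK hg_meas hgM hc c'
  subst hW
  simpa [minSqDist, div_eq_inv_mul] using hderiv.tendsto_slope_zero

/-- For bounded measurable `g` and a codebook `c` with pairwise distinct
centers, the directional derivative of the weighted distortion
`W_g(c) = ∫_K min_j ‖x − c_j‖² g(x) dx` at `c` along any direction `c'` exists and equals
`−2 Σ_j ∫_{V_j(c) ∩ K} ⟪x − c_j, c'_j⟫ g(x) dx`. -/
theorem directional_derivative_of_weighted_distortion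
    (d k : ℕ) (hd : 1 ≤ d) (hk : 1 ≤ k)
    (K : Set (EuclideanSpace ℝ (Fin d))) (hK : IsCompact K)
    (g : EuclideanSpace ℝ (Fin d) → ℝ)
    (hg_bdd : ∃ M : ℝ, ∀ x, |g x| ≤ M) (hg_meas : Measurable g)
    (W : (Fin k → EuclideanSpace ℝ (Fin d)) → ℝ)
    (hW : W = fun c => ∫ x in K, (⨅ j : Fin k, ‖x - c j‖ ^ 2) * g x)
    (c : Fin k → EuclideanSpace ℝ (Fin d))
    (hc : Function.Injective c) :
    ∀ c' : Fin k → EuclideanSpace ℝ (Fin d),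
      Filter.Tendsto (fun h : ℝ => (W (c + h • c') - W c) / h)
        (nhdsWithin 0 {0}ᶜ)
        (nhds (-2 * ∑ j : Fin k, ∫ x in voronoiCell c j ∩ K, ⟪x - c j, c' j⟫ * g x)) :=
  directional_derivative_of_weighted_distortion_general d k hk K hK g hg_bdd hg_meas W hW c hc
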